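/- arXiv:1405.5551 — 3 statements merged into one kernel-verified Lean document; each statement's English description precedes it below -/
import Mathlib

section
/- Let A be a commutative unital Banach algebra and x, y ∈ A with ‖1 − x‖ ≤ 1 and ‖1 − y‖ ≤ 1. Then the closure of xA + yA equals the closure of ((x+y)/2)A. -/
/-!
Put `z = 1 - x`, `w = 1 - y` and `a = (x + y) / 2`, so that `‖z‖, ‖w‖ ≤ 1`, `1 - a = (z + w) / 2`
and `y - x = z - w`. Since `1 - (1 - a) ^ n ∈ aA`, the element `z - w` lies in the closure of `aA`
as soon as `((z + w) / 2) ^ n (z - w) → 0` along a subsequence. Expanding `(z + w) ^ n (z - w)`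
binomially leaves the coefficients `C(n, j) - C(n, j + 1)`, whose absolute values telescope by
unimodality, giving `‖((z + w) / 2) ^ (2m) (z - w)‖ ≤ 2 C(2m, m) / 4 ^ m = O(m ^ (-1/2))`.
Finally `x` and `y` are `a ∓ (y - x) / 2`.
-/

open Finset Filter Topology

theorem Nat.choose_succ_le_choose_of_half_le {m j : ℕ} (hj : m ≤ j) :
    (2 * m).choose (j + 1) ≤ (2 * m).choose j := by
  rcases lt_or_ge j (2 * m) with hj' | hj'
  · rw [← Nat.choose_symm (by omega : j + 1 ≤ 2 * m), ← Nat.choose_symm hj'.le,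
      show 2 * m - j = 2 * m - (j + 1) + 1 by omega]
    exact Nat.choose_le_succ_of_lt_half_left (by omega)
  · simp [Nat.choose_eq_zero_of_lt (by omega : 2 * m < j + 1)]

theorem sum_abs_two_mul_choose_sub_choose_succ (m : ℕ) :
    ∑ j ∈ range (2 * m), |((2 * m).choose j : ℤ) - (2 * m).choose (j + 1)|
      = 2 * m.centralBinom - 2 := by
  set c : ℕ → ℤ := fun j => (2 * m).choose j
  have hrise : ∀ j ∈ range m, |c j - c (j + 1)| = c (j + 1) - c j := by
    intro j hj
    have : c j ≤ c (j + 1) := by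
      have hj : j < 2 * m / 2 := by rw [mem_range] at hj; omega
      simp only [c]
      exact_mod_cast Nat.choose_le_succ_of_lt_half_left hj
    rw [abs_sub_comm, abs_of_nonneg (sub_nonneg.2 this)]
  have hfall : ∀ j ∈ Ico m (2 * m), |c j - c (j + 1)| = -(c (j + 1) - c j) := by
    intro j hj
    have : c (j + 1) ≤ c j := by
      simp only [c]
      exact_mod_cast Nat.choose_succ_le_choose_of_half_le (mem_Ico.1 hj).1
    rw [neg_sub, abs_of_nonneg (sub_nonneg.2 this)]
  rw [← sum_range_add_sum_Ico _ (by omega : m ≤ 2 * m), sum_congr rfl hrise,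
    sum_congr rfl hfall, sum_neg_distrib, sum_range_sub, sum_Ico_sub _ (by omega)]
  simp only [c, Nat.choose_zero_right, Nat.choose_self, Nat.centralBinom_eq_two_mul_choose]
  push_cast
  ring

theorem add_pow_mul_sub_eq {R : Type*} [CommRing R] (z w : R) (n : ℕ) :
    (z + w) ^ n * (z - w) = z ^ (n + 1) - w ^ (n + 1) +
      ∑ j ∈ range n, ((n.choose j : ℤ) - n.choose (j + 1)) • (z ^ (j + 1) * w ^ (n - j)) := by
  have hz : (z + w) ^ n * z = ∑ j ∈ range n, (n.choose j : ℤ) • (z ^ (j + 1) * w ^ (n - j))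
      + z ^ (n + 1) := by
    rw [add_pow, sum_mul, sum_range_succ]
    congr 1
    · refine sum_congr rfl fun j _ => ?_
      rw [zsmul_eq_mul, Int.cast_natCast]; ring
    · simp only [Nat.sub_self, pow_zero, mul_one, Nat.choose_self, Nat.cast_one]; ring
  have hw : (z + w) ^ n * w = ∑ j ∈ range n, (n.choose (j + 1) : ℤ) • (z ^ (j + 1) * w ^ (n - j))
      + w ^ (n + 1) := by
    rw [add_pow, sum_mul, sum_range_succ']
    congr 1
    · refine sum_congr rfl fun j hj => ?_
      rw [zsmul_eq_mul, Int.cast_natCast, show n - j = n - (j + 1) + 1 by grind]; ring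
    · simp only [pow_zero, Nat.sub_zero, one_mul, Nat.choose_zero_right, Nat.cast_one, mul_one]
      ring
  simp only [sub_smul, sum_sub_distrib, mul_sub, hz, hw]
  abel

theorem norm_add_pow_two_mul_mul_sub_le {A : Type*} [SeminormedCommRing A] {z w : A}
    (hz : ‖z‖ ≤ 1) (hw : ‖w‖ ≤ 1) (m : ℕ) :
    ‖(z + w) ^ (2 * m) * (z - w)‖ ≤ 2 * m.centralBinom := by
  rw [add_pow_mul_sub_eq]
  set c : ℕ → ℤ := fun j => ((2 * m).choose j : ℤ) - (2 * m).choose (j + 1)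
  have hpow : ∀ {u : A}, ‖u‖ ≤ 1 → ∀ {k : ℕ}, 0 < k → ‖u ^ k‖ ≤ 1 := fun hu _ hk =>
    (norm_pow_le' _ hk).trans (pow_le_one₀ (norm_nonneg _) hu)
  have hterm : ∀ j ∈ range (2 * m), ‖c j • (z ^ (j + 1) * w ^ (2 * m - j))‖ ≤ |(c j : ℝ)| := by
    intro j hj
    rw [← Int.norm_eq_abs]
    refine (norm_zsmul_le _ _).trans (mul_le_of_le_one_right (norm_nonneg _) ?_)
    exact (norm_mul_le _ _).trans <| mul_le_one₀ (hpow hz j.succ_pos) (norm_nonneg _)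
      (hpow hw (by simpa using mem_range.1 hj))
  have hsum : ∑ j ∈ range (2 * m), |(c j : ℝ)| = 2 * m.centralBinom - 2 := by
    simp only [c]
    exact_mod_cast sum_abs_two_mul_choose_sub_choose_succ m
  calc _ ≤ ‖z ^ (2 * m + 1)‖ + ‖w ^ (2 * m + 1)‖ +
        ∑ j ∈ range (2 * m), ‖c j • (z ^ (j + 1) * w ^ (2 * m - j))‖ :=
        (norm_add_le _ _).trans (add_le_add (norm_sub_le _ _) (norm_sum_le _ _))
    _ ≤ 1 + 1 + (2 * m.centralBinom - 2) := by
        gcongr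
        · exact hpow hz (by omega)
        · exact hpow hw (by omega)
        · exact hsum ▸ sum_le_sum hterm
    _ = 2 * m.centralBinom := by ring

theorem Nat.two_mul_add_one_mul_centralBinom_sq_le (m : ℕ) :
    (2 * m + 1) * m.centralBinom ^ 2 ≤ 16 ^ m := by
  induction m with
  | zero => simp
  | succ k ih =>
    refine Nat.le_of_mul_le_mul_left ?_ (by positivity : 0 < (k + 1) ^ 2)
    calc (k + 1) ^ 2 * ((2 * (k + 1) + 1) * (k + 1).centralBinom ^ 2)
        = 4 * (2 * k + 3) * (2 * k + 1) * ((2 * k + 1) * k.centralBinom ^ 2) := by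
          rw [show (k + 1) ^ 2 * ((2 * (k + 1) + 1) * (k + 1).centralBinom ^ 2)
            = (2 * k + 3) * ((k + 1) * (k + 1).centralBinom) ^ 2 by ring,
            Nat.succ_mul_centralBinom_succ]
          ring
      _ ≤ 4 * (2 * k + 3) * (2 * k + 1) * 16 ^ k := Nat.mul_le_mul_left _ ih
      _ ≤ 16 * (k + 1) ^ 2 * 16 ^ k := Nat.mul_le_mul_right _ (by nlinarith)
      _ = (k + 1) ^ 2 * 16 ^ (k + 1) := by ring

theorem tendsto_centralBinom_div_four_pow :
    Tendsto (fun m : ℕ => (m.centralBinom : ℝ) / 4 ^ m) atTop (𝓝 0) := by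
  have hsq : ∀ m : ℕ, ((m.centralBinom : ℝ) / 4 ^ m) ^ 2 ≤ 1 / (m + 1) := by
    intro m
    have h : ((2 * m + 1) * m.centralBinom ^ 2 : ℝ) ≤ 16 ^ m := by
      exact_mod_cast Nat.two_mul_add_one_mul_centralBinom_sq_le m
    rw [div_pow, ← pow_mul, mul_comm, pow_mul, div_le_div_iff₀ (by positivity) (by positivity),
      one_mul, show ((4 : ℝ) ^ 2) = 16 by norm_num]
    nlinarith [sq_nonneg (m.centralBinom : ℝ)]
  have hsqrt := (Real.continuous_sqrt.tendsto 0).comp tendsto_one_div_add_atTop_nhds_zero_nat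
  rw [Real.sqrt_zero] at hsqrt
  exact squeeze_zero (fun m => by positivity) (fun m => Real.le_sqrt_of_sq_le (hsq m)) hsqrt

theorem tendsto_half_smul_add_pow_two_mul_mul_sub {A : Type*} [SeminormedCommRing A]
    [NormedAlgebra ℝ A] {z w : A} (hz : ‖z‖ ≤ 1) (hw : ‖w‖ ≤ 1) :
    Tendsto (fun m : ℕ => ((1 / 2 : ℝ) • (z + w)) ^ (2 * m) * (z - w)) atTop (𝓝 0) := by
  refine squeeze_zero_norm (fun m => ?_)
    (by simpa using tendsto_centralBinom_div_four_pow.const_mul 2)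
  rw [smul_pow, smul_mul_assoc]
  refine (norm_smul_le _ _).trans ?_
  calc ‖(1 / 2 : ℝ) ^ (2 * m)‖ * ‖(z + w) ^ (2 * m) * (z - w)‖
      ≤ (1 / 2) ^ (2 * m) * (2 * m.centralBinom) := by
        rw [Real.norm_of_nonneg (by positivity)]
        gcongr
        exact norm_add_pow_two_mul_mul_sub_le hz hw m
    _ = 2 * (m.centralBinom / 4 ^ m) := by
        rw [pow_mul, div_eq_mul_inv (m.centralBinom : ℝ), ← inv_pow,
          show ((1 : ℝ) / 2) ^ 2 = 4⁻¹ by norm_num]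
        ring

theorem mem_closure_span_singleton_of_tendsto_one_sub_pow_mul {R : Type*} [CommRing R]
    [TopologicalSpace R] [ContinuousSub R] {ι : Type*} {l : Filter ι} [l.NeBot] {a d : R}
    (k : ι → ℕ) (h : Tendsto (fun i => (1 - a) ^ k i * d) l (𝓝 0)) :
    d ∈ closure (Ideal.span {a} : Set R) := by
  refine mem_closure_of_tendsto (f := fun i => d - (1 - a) ^ k i * d)
    (by simpa using tendsto_const_nhds.sub h) (Eventually.of_forall fun i => ?_)
  refine Ideal.mem_span_singleton'.2 ⟨(∑ j ∈ range (k i), (1 - a) ^ j) * d, ?_⟩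
  linear_combination d * mul_neg_geom_sum (1 - a) (k i)

theorem closure_span_pair_eq_closure_span_singleton {R : Type*} [CommRing R]
    [TopologicalSpace R] [IsTopologicalRing R] {x y a : R}
    (hx : x ∈ closure (Ideal.span {a} : Set R)) (hy : y ∈ closure (Ideal.span {a} : Set R))
    (ha : a ∈ Ideal.span {x, y}) :
    closure (Ideal.span {x, y} : Set R) = closure (Ideal.span {a} : Set R) := by
  rw [← Submodule.topologicalClosure_coe] at hx hy ⊢
  refine congrArg _ (le_antisymm ?_ (Submodule.topologicalClosure_mono ?_))
  · refine Submodule.topologicalClosure_minimal _ ?_ (Ideal.span {a}).isClosed_topologicalClosure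
    exact Ideal.span_le.2 (Set.insert_subset hx (Set.singleton_subset_iff.2 hy))
  · exact Ideal.span_le.2 (Set.singleton_subset_iff.2 ha)

theorem closure_sum_ideals_eq_closure_average_ideal_general
    {A : Type*} [NormedCommRing A] [NormedAlgebra ℂ A]
    (x y : A) (hx : ‖1 - x‖ ≤ 1) (hy : ‖1 - y‖ ≤ 1) :
    closure {w : A | ∃ a b : A, w = x * a + y * b} =
      closure {w : A | ∃ a : A, w = ((1 / 2 : ℝ) • (x + y)) * a} := by
  set a : A := (1 / 2 : ℝ) • (x + y)
  have hpair : {w : A | ∃ a b : A, w = x * a + y * b} = Ideal.span {x, y} := by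
    ext; simp [Ideal.mem_span_pair, eq_comm, mul_comm]
  have hsingle : {w : A | ∃ c : A, w = a * c} = Ideal.span {a} := by
    ext; simp [Ideal.mem_span_singleton', eq_comm, mul_comm]
  have hsub : y - x ∈ closure (Ideal.span {a} : Set A) := by
    refine mem_closure_span_singleton_of_tendsto_one_sub_pow_mul (l := atTop) (fun m => 2 * m) ?_
    have h1 : 1 - a = (1 / 2 : ℝ) • ((1 - x) + (1 - y)) := by module
    have h2 : y - x = (1 - x) - (1 - y) := by abel
    simpa only [h1, h2] using tendsto_half_smul_add_pow_two_mul_mul_sub hx hy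
  set T := (Ideal.span {a}).topologicalClosure
  rw [← Submodule.topologicalClosure_coe] at hsub
  have haT : a ∈ T := Submodule.le_topologicalClosure _ (Ideal.mem_span_singleton_self a)
  have hhalf : (1 / 2 : ℝ) • (y - x) ∈ T := by
    rw [Algebra.smul_def]; exact Ideal.mul_mem_left T _ hsub
  rw [hpair, hsingle]
  refine closure_span_pair_eq_closure_span_singleton ?_ ?_ ?_
  · rw [← Submodule.topologicalClosure_coe, show x = a - (1 / 2 : ℝ) • (y - x) by module]
    exact T.sub_mem haT hhalf
  · rw [← Submodule.topologicalClosure_coe, show y = a + (1 / 2 : ℝ) • (y - x) by module]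
    exact T.add_mem haT hhalf
  · exact Ideal.mem_span_pair.2 ⟨algebraMap ℝ A (1 / 2), algebraMap ℝ A (1 / 2), by
      simp only [a, Algebra.smul_def, mul_add]⟩

/-- Let `A` be a commutative unital Banach algebra and `x, y ∈ A` with
`‖1 − x‖ ≤ 1` and `‖1 − y‖ ≤ 1`.  Then the closure of `xA + yA` equals the closure of
`((x+y)/2)A`. -/
theorem closure_sum_ideals_eq_closure_average_ideal
    {A : Type*} [NormedCommRing A] [NormedAlgebra ℂ A] [NormOneClass A] [CompleteSpace A]
    (x y : A) (hx : ‖1 - x‖ ≤ 1) (hy : ‖1 - y‖ ≤ 1) :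
    closure {w : A | ∃ a b : A, w = x * a + y * b} =
      closure {w : A | ∃ a : A, w = ((1 / 2 : ℝ) • (x + y)) * a} :=
  closure_sum_ideals_eq_closure_average_ideal_general x y hx hy
end

section
/- Let A be a commutative unital Banach algebra and (x_k) a sequence in A with ‖1 − x_k‖ ≤ 1 for all k. Set z = Σ_{k=1}^∞ 2^{-k} x_k. Then ‖1 − z‖ ≤ 1 and the closure of Σ_k x_k A equals the closure of zA. -/
/-!
If `‖1 - x‖ ≤ 1` and `‖1 - y‖ ≤ 1`, put `z = (x + y) / 2`, `w = 1 - z` and `d = z - x`. Then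
`w ± d` are `1 - x` and `1 - y`, and expanding `(2d) (2w)^k = (u - v) (u + v)^k` with `u = 1 - x`,
`v = 1 - y` shows that `2^(k+1) ‖w^k d‖` is at most the `ℓ¹` norm of the coefficients
`C(k, i-1) - C(k, i)`. By Cauchy–Schwarz against the binomial weights this is `O(2^k / √k)`, so
`w^k d → 0`, and `d = lim (1 - w^k) d = lim z (1 + ⋯ + w^(k-1)) d` lies in `closure (z A)`; hence so
does `x = z - d`.

For the sequence, the tails `Y j = ∑ 2^-(k+1) x (k + j)` satisfy `‖1 - Y j‖ ≤ 1` and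
`Y j = (x j + Y (j + 1)) / 2`, so by induction every `Y j`, and then every `x j`, lies in the closed
ideal `closure (Y 0 A)`. Conversely `Y 0 a` is the limit of the partial sums `∑ x k (2^-(k+1) a)`.
-/

open Filter Finset Topology

namespace Nat

theorem sum_range_choose_mul_two_mul_sub_sq (n : ℕ) :
    ∑ i ∈ range (n + 1), (n.choose i : ℝ) * (2 * i - n) ^ 2 = n * (2 : ℝ) ^ n := by
  induction n with
  | zero => simp
  | succ n ih =>
    have hsum : ∑ i ∈ range (n + 1), (n.choose i : ℝ) = 2 ^ n := by
      exact_mod_cast sum_range_choose n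
    refine (sum_choose_succ_mul (fun i _ => (2 * (i : ℝ) - (n + 1 : ℕ)) ^ 2) n).trans ?_
    calc _ = ∑ i ∈ range (n + 1),
          ((2 : ℝ) * (n.choose i * (2 * i - n) ^ 2) + 2 * n.choose i) := by
          rw [← sum_add_distrib]
          refine sum_congr rfl fun i _ => ?_
          push_cast
          ring
      _ = (n + 1 : ℕ) * (2 : ℝ) ^ (n + 1) := by
          rw [sum_add_distrib, ← mul_sum, ← mul_sum, ih, hsum]
          push_cast
          ring

theorem sq_sum_range_choose_mul_abs_le (n : ℕ) :
    (∑ i ∈ range (n + 1), (n.choose i : ℝ) * |2 * (i : ℝ) - n|) ^ 2 ≤ n * (4 : ℝ) ^ n := by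
  have hsum : ∑ i ∈ range (n + 1), (n.choose i : ℝ) = 2 ^ n := by
    exact_mod_cast sum_range_choose n
  calc _ ≤ (∑ i ∈ range (n + 1), (n.choose i : ℝ)) *
          ∑ i ∈ range (n + 1), (n.choose i : ℝ) * (2 * i - n) ^ 2 :=
        sum_sq_le_sum_mul_sum_of_sq_le_mul _ (fun _ _ => by positivity)
          (fun _ _ => by positivity) fun i _ => by rw [mul_pow, sq_abs, sq, mul_assoc]
    _ = n * 4 ^ n := by
        rw [hsum, sum_range_choose_mul_two_mul_sub_sq, show (4 : ℝ) = 2 * 2 by norm_num, mul_pow]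
        ring

theorem succ_mul_choose_succ_sub_two_mul_choose {k i : ℕ} (hi : i ≤ k + 1) :
    (k + 1 : ℝ) * ((k + 1).choose i - 2 * k.choose i) =
      (k + 1).choose i * (2 * i - (k + 1)) := by
  have h := congrArg (Nat.cast : ℕ → ℝ) (choose_mul_succ_eq k i)
  push_cast [Nat.cast_sub hi] at h
  linear_combination (-2) * h

theorem sum_range_abs_choose_succ_sub_two_mul_choose_le (k : ℕ) :
    ∑ i ∈ range (k + 2), |((k + 1).choose i : ℝ) - 2 * k.choose i| ≤
      2 ^ (k + 1) / √(k + 1) := by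
  set S := ∑ i ∈ range (k + 2), |((k + 1).choose i : ℝ) - 2 * k.choose i|
  have hk : (0 : ℝ) < k + 1 := by positivity
  have hS : (k + 1) * S =
      ∑ i ∈ range (k + 2), ((k + 1).choose i : ℝ) * |2 * (i : ℝ) - (k + 1 : ℕ)| := by
    rw [mul_sum]
    refine sum_congr rfl fun i hi => ?_
    rw [← abs_of_pos hk, ← abs_mul,
      succ_mul_choose_succ_sub_two_mul_choose (mem_range_succ_iff.1 hi), abs_mul,
      abs_of_nonneg (by positivity : (0 : ℝ) ≤ _)]
    push_cast
    rfl
  have hsq : ((k + 1) * S) ^ 2 ≤ (k + 1) * 4 ^ (k + 1) := by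
    rw [hS]
    exact_mod_cast sq_sum_range_choose_mul_abs_le (k + 1)
  rw [le_div_iff₀ (by positivity),
    ← pow_le_pow_iff_left₀ (by positivity) (by positivity) two_ne_zero, mul_pow,
    Real.sq_sqrt hk.le, ← pow_mul, pow_mul', show (2 : ℝ) ^ 2 = 4 by norm_num]
  exact le_of_mul_le_mul_left (by linear_combination hsq) hk

end Nat

/-- The coefficient `C(k+1, i) - 2 C(k, i)` is `C(k, i-1) - C(k, i)`, written without truncated
subtraction. -/
theorem sub_mul_add_pow_eq_sum {R : Type*} [CommRing R] (u v : R) (k : ℕ) :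
    (u - v) * (u + v) ^ k = ∑ i ∈ range (k + 2),
      (((k + 1).choose i : ℤ) - 2 * k.choose i) • (u ^ i * v ^ (k + 1 - i)) := by
  have hv : v * (u + v) ^ k = ∑ i ∈ range (k + 2), u ^ i * v ^ (k + 1 - i) * k.choose i := by
    rw [add_pow, mul_sum, sum_range_succ _ (k + 1), Nat.choose_succ_self, Nat.cast_zero,
      mul_zero, add_zero]
    refine sum_congr rfl fun i hi => ?_
    rw [show k + 1 - i = k - i + 1 by have := mem_range.1 hi; omega, pow_succ]
    ring
  rw [show (u - v) * (u + v) ^ k = (u + v) ^ (k + 1) - 2 * (v * (u + v) ^ k) by ring, hv,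
    add_pow, mul_sum, ← sum_sub_distrib]
  refine sum_congr rfl fun i _ => ?_
  rw [zsmul_eq_mul]
  push_cast
  ring

theorem norm_sub_mul_add_pow_le {A : Type*} [SeminormedCommRing A] [NormOneClass A] {u v : A}
    (hu : ‖u‖ ≤ 1) (hv : ‖v‖ ≤ 1) (k : ℕ) :
    ‖(u - v) * (u + v) ^ k‖ ≤ 2 ^ (k + 1) / √(k + 1) := by
  rw [sub_mul_add_pow_eq_sum]
  refine (norm_sum_le _ _).trans <| (sum_le_sum fun i _ => ?_).trans
    (Nat.sum_range_abs_choose_succ_sub_two_mul_choose_le k)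
  have hT : ‖u ^ i * v ^ (k + 1 - i)‖ ≤ 1 :=
    (norm_mul_le _ _).trans <| mul_le_one₀
      ((norm_pow_le _ _).trans (pow_le_one₀ (norm_nonneg _) hu)) (norm_nonneg _)
      ((norm_pow_le _ _).trans (pow_le_one₀ (norm_nonneg _) hv))
  calc _ ≤ ‖((k + 1).choose i : ℤ) - 2 * k.choose i‖ * ‖u ^ i * v ^ (k + 1 - i)‖ :=
        norm_zsmul_le _ _
    _ ≤ ‖((k + 1).choose i : ℤ) - 2 * k.choose i‖ := mul_le_of_le_one_right (norm_nonneg _) hT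
    _ = |((k + 1).choose i : ℝ) - 2 * k.choose i| := by rw [Int.norm_eq_abs]; push_cast; rfl

theorem tendsto_pow_mul_of_norm_add_le_one_of_norm_sub_le_one {A : Type*} [NormedCommRing A]
    [NormedAlgebra ℝ A] [NormOneClass A] {w d : A} (h₁ : ‖w + d‖ ≤ 1) (h₂ : ‖w - d‖ ≤ 1) :
    Tendsto (fun k => w ^ k * d) atTop (𝓝 0) := by
  have hbound (k : ℕ) : ‖w ^ k * d‖ ≤ 1 / √(k + 1) := by
    have hk : (0 : ℝ) < 2 ^ (k + 1) := by positivity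
    have hid : (w + d - (w - d)) * (w + d + (w - d)) ^ k = (2 : ℝ) ^ (k + 1) • (w ^ k * d) := by
      rw [Algebra.smul_def, map_pow, map_ofNat]
      ring
    have h := norm_sub_mul_add_pow_le h₁ h₂ k
    rw [hid, norm_smul, Real.norm_of_nonneg hk.le, div_eq_mul_one_div] at h
    exact le_of_mul_le_mul_left h hk
  refine squeeze_zero_norm hbound ?_
  simpa [Function.comp_def] using tendsto_inv_atTop_zero.comp
    (Real.tendsto_sqrt_atTop.comp (tendsto_natCast_atTop_atTop.atTop_add tendsto_const_nhds))

namespace Ideal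

variable {R : Type*} [CommRing R] [TopologicalSpace R] [IsTopologicalRing R]

theorem closure_le_closure_of_le_closure {I J : Ideal R} (h : I ≤ J.closure) :
    I.closure ≤ J.closure :=
  closure_minimal h isClosed_closure

theorem mem_closure_span_singleton_one_sub_of_tendsto {w d : R}
    (h : Tendsto (fun k => w ^ k * d) atTop (𝓝 0)) : d ∈ (span {1 - w}).closure := by
  have hlim : Tendsto (fun k => d - w ^ k * d) atTop (𝓝 d) := by
    simpa using tendsto_const_nhds.sub h
  refine mem_closure_of_tendsto hlim (Eventually.of_forall fun k => mem_span_singleton'.2 ?_)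
  exact ⟨(∑ i ∈ range k, w ^ i) * d, by rw [mul_comm, ← mul_assoc, mul_neg_geom_sum]; ring⟩

end Ideal

section UnitBall

variable {A : Type*} [NormedCommRing A] [NormedAlgebra ℝ A] [NormOneClass A]

theorem mem_closure_span_midpoint {x y : A} (hx : ‖1 - x‖ ≤ 1) (hy : ‖1 - y‖ ≤ 1) :
    x ∈ (Ideal.span {midpoint ℝ x y}).closure := by
  set z := midpoint ℝ x y
  have hd : z - x ∈ (Ideal.span {z}).closure := by
    simpa using Ideal.mem_closure_span_singleton_one_sub_of_tendsto (w := 1 - z) (d := z - x)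
      (tendsto_pow_mul_of_norm_add_le_one_of_norm_sub_le_one (by rwa [sub_add_sub_cancel])
        (by rwa [show 1 - z - (z - x) = 1 - y by
          linear_combination (-1 : A) * midpoint_add_self (R := ℝ) x y]))
  have hz : z ∈ (Ideal.span {z}).closure := subset_closure (Ideal.mem_span_singleton_self z)
  simpa using sub_mem hz hd

theorem mem_closure_span_of_eq_midpoint {x Y : ℕ → A} (hx : ∀ k, ‖1 - x k‖ ≤ 1)
    (hY : ∀ k, ‖1 - Y k‖ ≤ 1) (hrec : ∀ k, Y k = midpoint ℝ (x k) (Y (k + 1))) (k : ℕ) :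
    x k ∈ (Ideal.span {Y 0}).closure := by
  set J := (Ideal.span {Y 0}).closure
  have hJ {a : A} (ha : a ∈ J) : (Ideal.span {a}).closure ≤ J :=
    Ideal.closure_le_closure_of_le_closure ((Ideal.span_singleton_le_iff_mem _).2 ha)
  have hYJ (k : ℕ) : Y k ∈ J := by
    induction k with
    | zero => exact subset_closure (Ideal.mem_span_singleton_self _)
    | succ k ih =>
      refine hJ ih ?_
      rw [hrec k, midpoint_comm]
      exact mem_closure_span_midpoint (hY (k + 1)) (hx k)
  refine hJ (hYJ k) ?_
  rw [hrec k]
  exact mem_closure_span_midpoint (hx k) (hY (k + 1))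

end UnitBall

section WeightedSum

variable {ι E : Type*} [NormedAddCommGroup E] [NormedSpace ℝ E] [CompleteSpace E]
  {p : ι → ℝ} {a : E} {x : ι → E} {r : ℝ}

theorem summable_smul_sub_of_norm_sub_le (hp₀ : ∀ i, 0 ≤ p i) (hp : Summable p)
    (hx : ∀ i, ‖a - x i‖ ≤ r) : Summable fun i => p i • (a - x i) :=
  Summable.of_norm_bounded (hp.mul_right r) fun i => by
    rw [norm_smul, Real.norm_of_nonneg (hp₀ i)]
    exact mul_le_mul_of_nonneg_left (hx i) (hp₀ i)

theorem summable_smul_of_norm_sub_le (hp₀ : ∀ i, 0 ≤ p i) (hp : Summable p)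
    (hx : ∀ i, ‖a - x i‖ ≤ r) : Summable fun i => p i • x i :=
  ((hp.smul_const a).sub (summable_smul_sub_of_norm_sub_le hp₀ hp hx)).congr fun i => by
    rw [smul_sub, sub_sub_cancel]

theorem norm_sub_tsum_smul_le (hp₀ : ∀ i, 0 ≤ p i) (hp : HasSum p 1)
    (hx : ∀ i, ‖a - x i‖ ≤ r) : ‖a - ∑' i, p i • x i‖ ≤ r := by
  have ha : a = ∑' i, p i • a := by rw [hp.summable.tsum_smul_const, hp.tsum_eq, one_smul]
  rw [ha, ← (hp.summable.smul_const a).tsum_sub (summable_smul_of_norm_sub_le hp₀ hp.summable hx)]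
  simp_rw [← smul_sub]
  refine tsum_of_norm_bounded (by simpa using hp.mul_right r) fun i => ?_
  rw [norm_smul, Real.norm_of_nonneg (hp₀ i)]
  exact mul_le_mul_of_nonneg_left (hx i) (hp₀ i)

end WeightedSum

theorem hasSum_half_pow_succ : HasSum (fun k : ℕ => (1 / 2 : ℝ) ^ (k + 1)) 1 := by
  simpa [pow_succ', div_eq_mul_inv] using hasSum_geometric_two' 1

theorem tsum_half_pow_succ_smul_eq_midpoint {E : Type*} [NormedAddCommGroup E] [NormedSpace ℝ E]
    {x : ℕ → E} (hx : Summable fun k => (1 / 2 : ℝ) ^ (k + 1) • x k) :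
    ∑' k, (1 / 2 : ℝ) ^ (k + 1) • x k =
      midpoint ℝ (x 0) (∑' k, (1 / 2 : ℝ) ^ (k + 1) • x (k + 1)) := by
  rw [midpoint_eq_smul_add, hx.tsum_eq_zero_add, smul_add, ← tsum_const_smul'']
  simp only [pow_succ' _ (_ + 1), ← smul_smul]
  norm_num

/-- Let `A` be a commutative unital Banach algebra and `(x k)` a
sequence in `A` with `‖1 − x k‖ ≤ 1` for all `k`.  Set `z = Σ_{k} 2^{-(k+1)} x k`.
Then `‖1 − z‖ ≤ 1` and the closure of `Σ_k (x k) A` equals the closure of `zA`. -/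
theorem closure_countable_sum_ideals_eq_principal
    {A : Type*} [NormedCommRing A] [NormedAlgebra ℂ A] [NormOneClass A] [CompleteSpace A]
    (x : ℕ → A) (hx : ∀ k, ‖1 - x k‖ ≤ 1) :
    ‖1 - ∑' k : ℕ, ((1 / 2 : ℝ) ^ (k + 1)) • x k‖ ≤ 1 ∧
    closure {w : A | ∃ (n : ℕ) (a : ℕ → A), w = ∑ k ∈ Finset.range n, x k * a k} =
      closure {w : A | ∃ a : A, w = (∑' k : ℕ, ((1 / 2 : ℝ) ^ (k + 1)) • x k) * a} := by
  have hp₀ (k : ℕ) : (0 : ℝ) ≤ (1 / 2) ^ (k + 1) := by positivity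
  have hsum (j : ℕ) : Summable fun k => (1 / 2 : ℝ) ^ (k + 1) • x (k + j) :=
    summable_smul_of_norm_sub_le hp₀ hasSum_half_pow_succ.summable fun k => hx (k + j)
  set Y : ℕ → A := fun j => ∑' k, (1 / 2 : ℝ) ^ (k + 1) • x (k + j)
  have hY (j : ℕ) : ‖1 - Y j‖ ≤ 1 :=
    norm_sub_tsum_smul_le hp₀ hasSum_half_pow_succ fun k => hx (k + j)
  have hrec (j : ℕ) : Y j = midpoint ℝ (x j) (Y (j + 1)) := by
    rw [show Y j = _ from tsum_half_pow_succ_smul_eq_midpoint (hsum j)]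
    simp only [zero_add, add_right_comm _ 1 j]
    rfl
  have hxJ := mem_closure_span_of_eq_midpoint hx hY hrec
  have hspan : (Ideal.span {Y 0} : Set A) = {w | ∃ a, w = Y 0 * a} := by
    ext w
    simp [Ideal.mem_span_singleton', eq_comm, mul_comm]
  refine ⟨hY 0, subset_antisymm (closure_minimal ?_ isClosed_closure)
    (closure_minimal ?_ isClosed_closure)⟩
  · rintro _ ⟨n, a, rfl⟩
    change _ ∈ closure {w | ∃ a, w = Y 0 * a}
    rw [← hspan]
    exact Ideal.sum_mem _ fun k _ => Ideal.mul_mem_right _ _ (hxJ k)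
  · rintro _ ⟨a, rfl⟩
    refine mem_closure_of_tendsto ((hsum 0).hasSum.mul_right a).tendsto_sum_nat
      (Eventually.of_forall fun n => ⟨n, fun k => (1 / 2 : ℝ) ^ (k + 1) • a,
        sum_congr rfl fun k _ => ?_⟩)
    rw [mul_smul_comm, smul_mul_assoc]
    rfl
end

section
/- Let A be a nonunital Banach algebra with a contractive approximate identity (e_t). Then 0 lies in the weak* closure of the set of norm-one functionals φ on A with lim_t φ(e_t) = 1. -/
open Filter

/-!
If some `e t` stayed within `1/2` of all later `e s`, left and right multiplication by `e t`
would be within `1/2` of the identity operator, hence invertible by the Neumann series; a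
left-invertible left multiplication yields a left identity and a right-invertible right
multiplication a right identity, so `A` would be unital. Hence there are `s t ≥ t` with
`d t := e (s t) - e t` of norm at least `1/2`. Scaling a norming functional `ψ` of `d t` gives
the state `a ↦ ψ (a * d t) / ‖d t‖`, whose value at `a` is at most `2 ‖a * d t‖ → 0`.
-/

section Semigroup

variable {S : Type*} [Semigroup S]

theorem exists_forall_mul_eq_of_bijective_mul_left {x : S} (hx : Function.Bijective (x * ·)) :
    ∃ u : S, ∀ a, u * a = a := by
  obtain ⟨u, hu : x * u = x⟩ := hx.2 x
  exact ⟨u, fun a => hx.1 (show x * (u * a) = x * a by rw [← mul_assoc, hu])⟩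

theorem exists_forall_mul_eq_of_bijective_mul_right {y : S} (hy : Function.Bijective (· * y)) :
    ∃ v : S, ∀ a, a * v = a := by
  obtain ⟨v, hv : v * y = y⟩ := hy.2 y
  exact ⟨v, fun a => hy.1 (show a * v * y = a * y by rw [mul_assoc, hv])⟩

theorem exists_one_of_bijective_mul_left_of_bijective_mul_right {x y : S}
    (hx : Function.Bijective (x * ·)) (hy : Function.Bijective (· * y)) :
    ∃ u : S, ∀ a, u * a = a ∧ a * u = a := by
  obtain ⟨u, hu⟩ := exists_forall_mul_eq_of_bijective_mul_left hx
  obtain ⟨v, hv⟩ := exists_forall_mul_eq_of_bijective_mul_right hy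
  have huv : u = v := (hv u).symm.trans (hu v)
  exact ⟨u, fun a => ⟨hu a, huv ▸ hv a⟩⟩

end Semigroup

theorem ContinuousLinearMap.bijective_of_norm_one_sub_lt_one {𝕜 E : Type*}
    [NontriviallyNormedField 𝕜] [NormedAddCommGroup E] [NormedSpace 𝕜 E] [CompleteSpace E]
    {T : E →L[𝕜] E} (hT : ‖1 - T‖ < 1) : Function.Bijective T :=
  isUnit_iff_bijective.1 (by simpa using isUnit_one_sub_of_norm_lt_one hT)

section ApproximateIdentity

variable {𝕜 A ι : Type*} [NontriviallyNormedField 𝕜] [NonUnitalNormedRing A] [NormedSpace 𝕜 A]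
  [IsScalarTower 𝕜 A A] [SMulCommClass 𝕜 A A] {l : Filter ι} [l.NeBot] {e : ι → A}

theorem norm_one_sub_mul_le (hl : ∀ a : A, Tendsto (fun i => e i * a) l (nhds a)) {x : A} {c : ℝ}
    (hc : ∀ᶠ i in l, ‖e i - x‖ ≤ c) : ‖1 - ContinuousLinearMap.mul 𝕜 A x‖ ≤ c := by
  obtain ⟨i, hi⟩ := hc.exists
  refine ContinuousLinearMap.opNorm_le_bound _ ((norm_nonneg _).trans hi) fun a => ?_
  refine le_of_tendsto ((hl a).sub_const (x * a)).norm (hc.mono fun i hi => ?_)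
  calc ‖e i * a - x * a‖ = ‖(e i - x) * a‖ := by rw [sub_mul]
    _ ≤ ‖e i - x‖ * ‖a‖ := norm_mul_le _ _
    _ ≤ c * ‖a‖ := by gcongr

theorem norm_one_sub_mul_flip_le (hr : ∀ a : A, Tendsto (fun i => a * e i) l (nhds a)) {x : A}
    {c : ℝ} (hc : ∀ᶠ i in l, ‖e i - x‖ ≤ c) :
    ‖1 - (ContinuousLinearMap.mul 𝕜 A).flip x‖ ≤ c := by
  obtain ⟨i, hi⟩ := hc.exists
  refine ContinuousLinearMap.opNorm_le_bound _ ((norm_nonneg _).trans hi) fun a => ?_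
  refine le_of_tendsto ((hr a).sub_const (a * x)).norm (hc.mono fun i hi => ?_)
  calc ‖a * e i - a * x‖ = ‖a * (e i - x)‖ := by rw [mul_sub]
    _ ≤ ‖a‖ * ‖e i - x‖ := norm_mul_le _ _
    _ ≤ c * ‖a‖ := by rw [mul_comm]; gcongr

end ApproximateIdentity

theorem frequently_le_norm_sub_of_not_exists_one (𝕜 : Type*) {A ι : Type*}
    [NontriviallyNormedField 𝕜] [NonUnitalNormedRing A] [NormedSpace 𝕜 A] [IsScalarTower 𝕜 A A]
    [SMulCommClass 𝕜 A A] [CompleteSpace A] {l : Filter ι} [l.NeBot] {e : ι → A}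
    (hnu : ¬ ∃ u : A, ∀ a : A, u * a = a ∧ a * u = a)
    (hl : ∀ a : A, Tendsto (fun i => e i * a) l (nhds a))
    (hr : ∀ a : A, Tendsto (fun i => a * e i) l (nhds a)) {c : ℝ} (hc : c < 1) (x : A) :
    ∃ᶠ i in l, c ≤ ‖e i - x‖ := by
  by_contra h
  have hclose : ∀ᶠ i in l, ‖e i - x‖ ≤ c := (not_frequently.1 h).mono fun _ hi => (not_le.1 hi).le
  exact hnu <| exists_one_of_bijective_mul_left_of_bijective_mul_right
    (ContinuousLinearMap.bijective_of_norm_one_sub_lt_one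
      ((norm_one_sub_mul_le (𝕜 := 𝕜) hl hclose).trans_lt hc))
    (ContinuousLinearMap.bijective_of_norm_one_sub_lt_one
      ((norm_one_sub_mul_flip_le (𝕜 := 𝕜) hr hclose).trans_lt hc))

theorem StrongDual.norm_eq_one_of_tendsto_apply {𝕜 E ι : Type*} [NontriviallyNormedField 𝕜]
    [SeminormedAddCommGroup E] [NormedSpace 𝕜 E] {l : Filter ι} [l.NeBot] {e : ι → E}
    (he : ∀ i, ‖e i‖ ≤ 1) {φ : StrongDual 𝕜 E} (hφ : ‖φ‖ ≤ 1)
    (h : Tendsto (fun i => φ (e i)) l (nhds 1)) : ‖φ‖ = 1 := by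
  refine hφ.antisymm (le_of_tendsto' (by simpa using h.norm) fun i => ?_)
  calc ‖φ (e i)‖ ≤ ‖φ‖ * ‖e i‖ := φ.le_opNorm _
    _ ≤ ‖φ‖ := mul_le_of_le_one_right (norm_nonneg _) (he i)

theorem StrongDual.exists_apply_eq_one_norm_eq_inv {𝕜 E : Type*} [RCLike 𝕜]
    [NormedAddCommGroup E] [NormedSpace 𝕜 E] {d : E} (hd : d ≠ 0) :
    ∃ ψ : StrongDual 𝕜 E, ψ d = 1 ∧ ‖ψ‖ = ‖d‖⁻¹ := by
  obtain ⟨g, hg, hgd⟩ := exists_dual_vector 𝕜 d (norm_ne_zero_iff.2 hd)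
  refine ⟨((‖d‖⁻¹ : ℝ) : 𝕜) • g, ?_, ?_⟩
  · simp [hgd, hd]
  · rw [norm_smul, hg, mul_one, RCLike.norm_ofReal, abs_of_nonneg (by positivity)]

theorem exists_state_apply_le_norm_mul_div {𝕜 A ι : Type*} [RCLike 𝕜] [NonUnitalNormedRing A]
    [NormedSpace 𝕜 A] [IsScalarTower 𝕜 A A] [SMulCommClass 𝕜 A A] {l : Filter ι} [l.NeBot]
    {e : ι → A} (he : ∀ i, ‖e i‖ ≤ 1) {d : A} (hd : d ≠ 0)
    (hl : Tendsto (fun i => e i * d) l (nhds d)) :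
    ∃ φ : StrongDual 𝕜 A, ‖φ‖ = 1 ∧ Tendsto (fun i => φ (e i)) l (nhds 1) ∧
      ∀ a, ‖φ a‖ ≤ ‖a * d‖ / ‖d‖ := by
  obtain ⟨ψ, hψd, hψ⟩ := StrongDual.exists_apply_eq_one_norm_eq_inv (𝕜 := 𝕜) hd
  set φ := ψ.comp ((ContinuousLinearMap.mul 𝕜 A).flip d)
  have hφ_le : ∀ a, ‖φ a‖ ≤ ‖a * d‖ / ‖d‖ := fun a => by
    simpa [φ, hψ, div_eq_inv_mul] using ψ.le_opNorm (a * d)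
  have hφ_tendsto : Tendsto (fun i => φ (e i)) l (nhds 1) := by
    rw [← hψd]
    exact (ψ.continuous.tendsto d).comp hl
  have hφ_norm : ‖φ‖ ≤ 1 := ContinuousLinearMap.opNorm_le_bound _ zero_le_one fun a =>
    (hφ_le a).trans <| by
      rw [one_mul, div_le_iff₀ (norm_pos_iff.2 hd)]
      exact norm_mul_le _ _
  exact ⟨φ, StrongDual.norm_eq_one_of_tendsto_apply he hφ_norm hφ_tendsto, hφ_tendsto, hφ_le⟩

/-- Let `A` be a nonunital Banach algebra with a contractive
approximate identity `(e t)`.  Then `0` lies in the weak* closure of the set of norm-one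
functionals `φ` on `A` with `lim_t φ(e t) = 1`. -/
theorem zero_mem_weakStarClosure_states
    {A : Type*} [NonUnitalNormedRing A] [NormedSpace ℂ A]
    [IsScalarTower ℂ A A] [SMulCommClass ℂ A A] [CompleteSpace A]
    (hnu : ¬ ∃ u : A, ∀ a : A, u * a = a ∧ a * u = a)
    {ι : Type*} [Nonempty ι] [SemilatticeSup ι]
    (e : ι → A) (hec : ∀ t, ‖e t‖ ≤ 1)
    (hl : ∀ a : A, Tendsto (fun t => e t * a) atTop (nhds a))
    (hr : ∀ a : A, Tendsto (fun t => a * e t) atTop (nhds a)) :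
    (0 : WeakDual ℂ A) ∈ closure {φ : WeakDual ℂ A |
      ‖WeakDual.toStrongDual φ‖ = 1 ∧
      Tendsto (fun t => φ (e t)) atTop (nhds (1 : ℂ))} := by
  choose s hts hfar using fun t => frequently_atTop.1
    (frequently_le_norm_sub_of_not_exists_one ℂ hnu hl hr (by norm_num : (1 / 2 : ℝ) < 1) (e t)) t
  have hd : ∀ t, e (s t) - e t ≠ 0 := fun t =>
    norm_pos_iff.1 ((by norm_num : (0 : ℝ) < 1 / 2).trans_le (hfar t))
  choose φ hφ_norm hφ_tendsto hφ_le using fun t =>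
    exists_state_apply_le_norm_mul_div (𝕜 := ℂ) hec (hd t) (hl _)
  refine mem_closure_of_tendsto (b := atTop) (f := fun t => StrongDual.toWeakDual (φ t)) ?_
    (.of_forall fun t => ⟨hφ_norm t, hφ_tendsto t⟩)
  refine tendsto_iff_forall_eval_tendsto_topDualPairing.2 fun a => ?_
  have hs : Tendsto s atTop atTop := tendsto_atTop_mono hts tendsto_id
  have had : Tendsto (fun t => a * (e (s t) - e t)) atTop (nhds 0) := by
    simpa [mul_sub] using ((hr a).comp hs).sub (hr a)
  refine squeeze_zero_norm (fun t => ?_) (by simpa using had.norm.const_mul 2)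
  calc ‖φ t a‖ ≤ ‖a * (e (s t) - e t)‖ / ‖e (s t) - e t‖ := hφ_le t a
    _ ≤ 2 * ‖a * (e (s t) - e t)‖ := by
      rw [div_le_iff₀ (norm_pos_iff.2 (hd t))]
      nlinarith [hfar t, norm_nonneg (a * (e (s t) - e t))]
end
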